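/- Let (T,σ) be a leaf-colored planted phylogenetic tree and x ≠ y two leaves of T. Then the following are equivalent: (i) ℓ_μ(lca_T(x,y)) = □ (duplication) for every species tree S and every HGT-free σ-reconciliation (T,S,μ,σ) satisfying axiom (R5); (ii) there exist two distinct children v' and v'' of lca_T(x,y) in T such that σ(L(T(v'))) ∩ σ(L(T(v''))) ≠ ∅. -/

import Mathlib

/-- A planted phylogenetic rooted tree, encoded by a parent function on a
finite vertex set.  The root `0_T` is a fixed point of `parent`; every vertex
reaches the root by iterating `parent`; the root has exactly one child
(`planted`); and every inner vertex (non-root vertex having a child) has at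
least two children (`phylo`). -/
structure PPTree where
  V : Type
  [fintypeV : Fintype V]
  [decEqV : DecidableEq V]
  root : V
  parent : V → V
  parent_root : parent root = root
  reach : ∀ v : V, ∃ n : ℕ, parent^[n] v = root
  planted : ∃! v : V, v ≠ root ∧ parent v = root
  phylo : ∀ v : V, v ≠ root → (∃ u, parent u = v ∧ u ≠ v) →
      ∃ u w, parent u = v ∧ parent w = v ∧ u ≠ w ∧ u ≠ v ∧ w ≠ v

attribute [instance] PPTree.fintypeV PPTree.decEqV

/-!
If two children `v', v''` of `z = lca(x, y)` share a species `c`, then, since an HGT-free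
reconciliation `μ` is monotone, the leaf `c` of `S` lies below both `μ(v')` and `μ(v'')`. These
images are therefore comparable, which (R5)(ii) forbids when `μ(z)` is an inner vertex of `S`.

Conversely, if the species sets of the children of `z` are pairwise disjoint, take the species
tree of height three in which the child `ρ` of the root has one child for each child `v` of `z`
(the leaf of its species if `v` carries a single species, otherwise a vertex whose children are
the leaves of the species of `v`) and one leaf for each remaining species. Send `z` to `ρ`, each
leaf to its species, each inner vertex strictly below `z` to the edge above the vertex
representing its ancestor among the children of `z`, and every other inner vertex to the edge
above `ρ`. This map is monotone, which gives (R3) and HGT-freeness, and disjointness gives (R5);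
so `z` is a speciation there.
-/

namespace PPTree

variable (T : PPTree)

/-- `T.le x y` means `x ⪯_T y`, i.e. `y` is an ancestor of `x` (or `x = y`). -/
def le (x y : T.V) : Prop := ∃ n : ℕ, T.parent^[n] x = y

/-- `T.lt x y` means `x ≺_T y`. -/
def lt (x y : T.V) : Prop := T.le x y ∧ x ≠ y

/-- Leaves are the `⪯_T`-minimal vertices, i.e. vertices without children. -/
def isLeaf (v : T.V) : Prop := ∀ u, T.parent u = v → u = v

/-- Inner vertices: neither leaves nor the planted root. -/
def inner (v : T.V) : Prop := v ≠ T.root ∧ ¬ T.isLeaf v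

/-- The last common ancestor of two vertices: the `⪯_T`-minimal common
ancestor. -/
noncomputable def lca (x y : T.V) : T.V :=
  @Classical.epsilon _ ⟨T.root⟩
    fun v => T.le x v ∧ T.le y v ∧ ∀ w, T.le x w → T.le y w → T.le v w

/-- The last common ancestor of a set of vertices. -/
noncomputable def lcaSet (A : Set T.V) : T.V :=
  @Classical.epsilon _ ⟨T.root⟩
    fun v => (∀ a ∈ A, T.le a v) ∧ ∀ w, (∀ a ∈ A, T.le a w) → T.le v w

/-- `ρ_T`, the unique child of the planted root. -/
noncomputable def rho : T.V := T.planted.choose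

theorem rho_ne_root : T.rho ≠ T.root := T.planted.choose_spec.1.1

/-- Edges of `T`, identified with their child endpoint: the vertex `v ≠ 0_T`
represents the edge `(parent v, v)`. -/
abbrev Edge := {v : T.V // v ≠ T.root}

/-- The union `V(T) ∪ E(T)`. -/
abbrev VE := T.V ⊕ T.Edge

/-- The ancestor order `⪯_T` extended to `V(T) ∪ E(T)`: for an edge `e = uv`
(`u` the parent of `v`), `x ⪯ e` iff `x ⪯ v`, `e ⪯ x` iff `u ⪯ x`, and
`e ⪯ f` iff the child endpoints are comparable accordingly. -/
def leVE : T.VE → T.VE → Prop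
  | Sum.inl x, Sum.inl y => T.le x y
  | Sum.inl x, Sum.inr e => T.le x e.1
  | Sum.inr e, Sum.inl y => T.le (T.parent e.1) y
  | Sum.inr e, Sum.inr f => T.le e.1 f.1

def ltVE (a b : T.VE) : Prop := T.leVE a b ∧ a ≠ b

/-- Two elements of `V(T) ∪ E(T)` are comparable. -/
def cmpVE (a b : T.VE) : Prop := T.leVE a b ∨ T.leVE b a

/-- Membership in `L(T)` for elements of `V(T) ∪ E(T)`. -/
def isLeafVE : T.VE → Prop
  | Sum.inl v => T.isLeaf v
  | Sum.inr _ => False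

/-- Map an element of `V(T) ∪ E(T)` to a vertex (an edge `uv` is sent to its
child endpoint `v`). -/
def toVertex : T.VE → T.V
  | Sum.inl v => v
  | Sum.inr e => e.1

end PPTree

/-- Axioms (R0)–(R3) of a reconciliation map `μ : V(T) → V(S) ∪ E(S)`. -/
structure IsRecon (T S : PPTree) (μ : T.V → S.VE) : Prop where
  R0 : ∀ x, μ x = Sum.inl S.root ↔ x = T.root
  R1 : ∀ x, S.isLeafVE (μ x) ↔ T.isLeaf x
  R2 : ∀ x y, T.lt y x → (∃ u, μ x = Sum.inl u) → (∃ v, μ y = Sum.inl v) → μ x ≠ μ y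
  R3 : ∀ x y, T.lt y x → ¬ S.ltVE (μ x) (μ y)

/-- A reconciliation is HGT-free if the images of the endpoints of every edge
of `T` are `⪯_S`-comparable. -/
def IsHGTFree (T S : PPTree) (μ : T.V → S.VE) : Prop :=
  ∀ v : T.V, v ≠ T.root → S.cmpVE (μ (T.parent v)) (μ v)

/-- `(T,S,μ,σ)` is a σ-reconciliation when `μ` restricted to `L(T)` equals
`σ`. -/
def SigmaCompat (T S : PPTree) (μ : T.V → S.VE) (σ : T.V → S.V) : Prop :=
  ∀ x, T.isLeaf x → μ x = Sum.inl (σ x)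

/-- A time map for `T`. -/
def IsTimeMap (T : PPTree) (τ : T.V → ℝ) : Prop :=
  ∀ x y, T.lt x y → τ x < τ y

/-- Axioms (S0)–(S3) of a relaxed scenario `(T,S,μ,τ_T,τ_S)`. -/
structure IsRelaxedScenario (T S : PPTree) (μ : T.V → S.VE)
    (τT : T.V → ℝ) (τS : S.V → ℝ) : Prop where
  timeT : IsTimeMap T τT
  timeS : IsTimeMap S τS
  S0 : ∀ x, μ x = Sum.inl S.root ↔ x = T.root
  S1 : ∀ x, S.isLeafVE (μ x) ↔ T.isLeaf x
  S2 : ∀ x v, μ x = Sum.inl v → τS v = τT x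
  S3 : ∀ x (e : S.Edge), μ x = Sum.inr e → τS e.1 < τT x ∧ τT x < τS (S.parent e.1)

/-- A planted phylogenetic tree whose leaf set is (identified with) the finite
type `L` via the embedding `emb`. -/
structure LeafTree (L : Type) [Fintype L] [DecidableEq L] extends PPTree where
  emb : L → toPPTree.V
  emb_inj : Function.Injective emb
  emb_leaf : ∀ v : L, toPPTree.isLeaf (emb v)
  emb_surj : ∀ l, toPPTree.isLeaf l → ∃ v : L, emb v = l

/-- The tree `T` displays the rooted triple `ab|c`:
`lca(a,b) ≺ lca(a,c) = lca(b,c)`. -/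
def displaysTriple (T : PPTree) (a b c : T.V) : Prop :=
  T.lt (T.lca a b) (T.lca a c) ∧ T.lca a c = T.lca b c

section BMG

variable {V Y : Type} [Fintype V] [DecidableEq V]

/-- `y` is a best match of `x` in the leaf-colored tree `(T,σ)`:
`σ(x) ≠ σ(y)` and `lca(x,y) ⪯ lca(x,y')` for all leaves `y'` of the same color
as `y`. -/
def LeafTree.bestMatch (T : LeafTree V) (σ : V → Y) (x y : V) : Prop :=
  σ x ≠ σ y ∧ ∀ y' : V, σ y' = σ y →
    T.toPPTree.le (T.toPPTree.lca (T.emb x) (T.emb y))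
      (T.toPPTree.lca (T.emb x) (T.emb y'))

/-- `(G,σ)` is the best match graph `𝔅(T,σ)` of the leaf-colored tree
`(T,σ)`. -/
def Explains (T : LeafTree V) (σ : V → Y) (G : V → V → Prop) : Prop :=
  ∀ x y : V, G x y ↔ T.bestMatch σ x y

/-- The triple `ab|b'` is informative for `(G,σ)`. -/
def Informative (G : V → V → Prop) (σ : V → Y) (a b b' : V) : Prop :=
  a ≠ b ∧ a ≠ b' ∧ b ≠ b' ∧ σ a ≠ σ b ∧ σ b = σ b' ∧ G a b ∧ ¬ G a b'

/-- The triple `ab|b'` is forbidden for `(G,σ)`. -/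
def Forbidden (G : V → V → Prop) (σ : V → Y) (a b b' : V) : Prop :=
  a ≠ b ∧ a ≠ b' ∧ b ≠ b' ∧ σ a ≠ σ b ∧ σ b = σ b' ∧ G a b ∧ G a b'

end BMG

/-- Axiom (R5) for a reconciliation `(T,S,μ)`: whenever `μ(x) ∈ V⁰(S)`,
(i) `μ(x) = lca_S(μ(v'),μ(v''))` for at least two distinct children `v',v''`
of `x`, and (ii) the images of any two distinct children of `x` are
`⪯_S`-incomparable. -/
def R5 (T S : PPTree) (μ : T.V → S.VE) : Prop :=
  ∀ x u, μ x = Sum.inl u → u ≠ S.root → ¬ S.isLeaf u →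
    ((∃ v' v'' : T.V, v' ≠ v'' ∧
        T.parent v' = x ∧ v' ≠ x ∧ T.parent v'' = x ∧ v'' ≠ x ∧
        u = S.lca (S.toVertex (μ v')) (S.toVertex (μ v''))) ∧
     (∀ v' v'' : T.V, T.parent v' = x → v' ≠ x → T.parent v'' = x → v'' ≠ x →
        v' ≠ v'' → ¬ S.cmpVE (μ v') (μ v'')))

namespace PPTree

variable (T : PPTree)

def IsChild (v p : T.V) : Prop := T.parent v = p ∧ v ≠ p

theorem le_refl (v : T.V) : T.le v v := ⟨0, rfl⟩

theorem le_parent (v : T.V) : T.le v (T.parent v) := ⟨1, rfl⟩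

theorem le_root (v : T.V) : T.le v T.root := T.reach v

theorem le_trans {a b c : T.V} (hab : T.le a b) (hbc : T.le b c) : T.le a c := by
  obtain ⟨n, rfl⟩ := hab
  obtain ⟨m, rfl⟩ := hbc
  exact ⟨m + n, Function.iterate_add_apply _ m n a⟩

variable {T} in
theorem IsChild.le {v p : T.V} (h : T.IsChild v p) : T.le v p := h.1 ▸ T.le_parent v

theorem eq_root_of_root_le {v : T.V} (h : T.le T.root v) : v = T.root := by
  obtain ⟨n, rfl⟩ := h
  exact Function.iterate_fixed T.parent_root n

theorem parent_ne_self {v : T.V} (hv : v ≠ T.root) : T.parent v ≠ v := by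
  intro h
  obtain ⟨n, hn⟩ := T.reach v
  exact hv (Function.iterate_fixed h n ▸ hn)

theorem le_antisymm {a b : T.V} (hab : T.le a b) (hba : T.le b a) : a = b := by
  obtain ⟨n, rfl⟩ := hab
  obtain ⟨m, hm⟩ := hba
  rcases Nat.eq_zero_or_pos n with rfl | hn
  · rfl
  have hper : Function.IsPeriodicPt T.parent (m + n) a := by
    rw [Function.IsPeriodicPt, Function.IsFixedPt, Function.iterate_add_apply, hm]
  obtain ⟨k, hk⟩ := T.reach a
  -- `a` lies on a cycle that reaches the fixed point `root`, so `a` is the root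
  have ha : a = T.root :=
    calc a = T.parent^[(m + n) * k] a := (hper.mul_const k).eq.symm
      _ = T.parent^[(m + n) * k - k] (T.parent^[k] a) := by
        rw [← Function.iterate_add_apply,
          Nat.sub_add_cancel (Nat.le_mul_of_pos_left k (by omega))]
      _ = T.root := by rw [hk, Function.iterate_fixed T.parent_root]
  subst ha
  exact (Function.iterate_fixed T.parent_root n).symm

theorem le_total_of_le {a b c : T.V} (hab : T.le a b) (hac : T.le a c) :
    T.le b c ∨ T.le c b := by
  obtain ⟨n, rfl⟩ := hab
  obtain ⟨m, rfl⟩ := hac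
  rcases Nat.le_total n m with h | h
  · exact .inl ⟨m - n, by rw [← Function.iterate_add_apply, Nat.sub_add_cancel h]⟩
  · exact .inr ⟨n - m, by rw [← Function.iterate_add_apply, Nat.sub_add_cancel h]⟩

theorem parent_le_of_le_of_ne {a b : T.V} (h : T.le a b) (hne : a ≠ b) :
    T.le (T.parent a) b := by
  obtain ⟨_ | n, hn⟩ := h
  · exact absurd hn hne
  · exact ⟨n, hn⟩

theorem eq_root_of_parent_le {v : T.V} (h : T.le (T.parent v) v) : v = T.root := by
  by_contra hv
  exact T.parent_ne_self hv (T.le_antisymm h (T.le_parent v))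

theorem le_iff_eq_or_parent_le {a b : T.V} : T.le a b ↔ b = a ∨ T.le (T.parent a) b := by
  refine ⟨fun h => or_iff_not_imp_left.mpr fun hne =>
    T.parent_le_of_le_of_ne h (Ne.symm hne), ?_⟩
  rintro (rfl | h)
  · exact T.le_refl b
  · exact T.le_trans (T.le_parent a) h

theorem exists_isChild_le {a p : T.V} (h : T.le a p) (hne : a ≠ p) :
    ∃ c, T.IsChild c p ∧ T.le a c := by
  classical
  obtain ⟨m, hm⟩ : ∃ m, Nat.find h = m + 1 :=
    Nat.exists_eq_succ_of_ne_zero fun h0 => hne (by simpa [h0] using Nat.find_spec h)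
  refine ⟨T.parent^[m] a, ⟨?_, Nat.find_min h (by omega)⟩, m, rfl⟩
  rw [← Function.iterate_succ_apply' T.parent m a, Nat.succ_eq_add_one, ← hm]
  exact Nat.find_spec h

theorem eq_of_le_of_isLeaf {a v : T.V} (hv : T.isLeaf v) (h : T.le a v) : a = v := by
  by_contra hne
  obtain ⟨c, ⟨hc, hcv⟩, -⟩ := T.exists_isChild_le h hne
  exact hcv (hv c hc)

theorem root_not_isLeaf : ¬ T.isLeaf T.root := fun h =>
  T.rho_ne_root (h T.rho T.planted.choose_spec.1.2)

theorem ne_root_of_isLeaf {v : T.V} (h : T.isLeaf v) : v ≠ T.root := by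
  rintro rfl
  exact T.root_not_isLeaf h

theorem not_isLeaf_parent {v : T.V} (hv : v ≠ T.root) : ¬ T.isLeaf (T.parent v) :=
  fun h => T.parent_ne_self hv (h v rfl).symm

theorem le_rho {v : T.V} (hv : v ≠ T.root) : T.le v T.rho := by
  obtain ⟨c, ⟨hc, hcr⟩, hvc⟩ := T.exists_isChild_le (T.le_root v) hv
  rwa [T.planted.unique ⟨hcr, hc⟩ T.planted.choose_spec.1] at hvc

variable {T} in
theorem IsChild.eq_of_le {a c p : T.V} (ha : T.IsChild a p) (hc : T.IsChild c p)
    (h : T.le a c) : a = c := by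
  by_contra hne
  have hpc : T.le p c := ha.1 ▸ T.parent_le_of_le_of_ne h hne
  exact hc.2 (T.le_antisymm hc.le hpc)

theorem eq_of_isChild_of_le {u a c p : T.V} (ha : T.IsChild a p) (hc : T.IsChild c p)
    (hua : T.le u a) (huc : T.le u c) : a = c := by
  rcases T.le_total_of_le hua huc with h | h
  · exact ha.eq_of_le hc h
  · exact (hc.eq_of_le ha h).symm

instance : IsTrans T.V T.lt :=
  ⟨fun _ _ _ hab hbc => ⟨T.le_trans hab.1 hbc.1, fun h =>
    hbc.2 (T.le_antisymm hbc.1 (h ▸ hab.1))⟩⟩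

instance : Std.Irrefl T.lt := ⟨fun _ h => h.2 rfl⟩

theorem exists_isLeaf_le (v : T.V) : ∃ l, T.isLeaf l ∧ T.le l v := by
  obtain ⟨l, hlv, hmin⟩ := (Finite.wellFounded_of_trans_of_irrefl T.lt).has_min
    {u | T.le u v} ⟨v, T.le_refl v⟩
  exact ⟨l, fun c hc => by_contra fun hne =>
    hmin c (T.le_trans (hc ▸ T.le_parent c) hlv) ⟨hc ▸ T.le_parent c, hne⟩, hlv⟩

theorem lca_spec (x y : T.V) :
    T.le x (T.lca x y) ∧ T.le y (T.lca x y) ∧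
      ∀ w, T.le x w → T.le y w → T.le (T.lca x y) w := by
  classical
  have hex : ∃ n, T.le y (T.parent^[n] x) := ⟨_, (T.reach x).choose_spec ▸ T.le_root y⟩
  refine Classical.epsilon_spec
    (p := fun v => T.le x v ∧ T.le y v ∧ ∀ w, T.le x w → T.le y w → T.le v w)
    ⟨_, ⟨Nat.find hex, rfl⟩, Nat.find_spec hex, ?_⟩
  rintro w ⟨m, rfl⟩ hyw
  have hle : Nat.find hex ≤ m := Nat.find_min' hex hyw
  exact ⟨m - Nat.find hex, by rw [← Function.iterate_add_apply, Nat.sub_add_cancel hle]⟩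

theorem lca_ne_root {x y : T.V} (hx : x ≠ T.root) (hy : y ≠ T.root) :
    T.lca x y ≠ T.root := fun h =>
  T.rho_ne_root (T.eq_root_of_root_le (h ▸ (T.lca_spec x y).2.2 _ (T.le_rho hx) (T.le_rho hy)))

theorem lca_not_isLeaf {x y : T.V} (hxy : x ≠ y) : ¬ T.isLeaf (T.lca x y) := fun h =>
  hxy ((T.eq_of_le_of_isLeaf h (T.lca_spec x y).1).trans
    (T.eq_of_le_of_isLeaf h (T.lca_spec x y).2.1).symm)

theorem lca_eq_of_isChild {a b p : T.V} (ha : T.IsChild a p) (hb : T.IsChild b p)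
    (hab : a ≠ b) : T.lca a b = p := by
  obtain ⟨hal, hbl, hmin⟩ := T.lca_spec a b
  by_contra hne
  obtain ⟨c, hc, hlc⟩ := T.exists_isChild_le (hmin p ha.le hb.le) hne
  exact hab ((ha.eq_of_le hc (T.le_trans hal hlc)).trans
    (hb.eq_of_le hc (T.le_trans hbl hlc)).symm)

theorem exists_two_isChild {z : T.V} (hzr : z ≠ T.root) (hzl : ¬ T.isLeaf z) :
    ∃ v v', T.IsChild v z ∧ T.IsChild v' z ∧ v ≠ v' := by
  obtain ⟨u, hu⟩ := not_forall.mp hzl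
  obtain ⟨v, v', hv, hv', hne, hvz, hvz'⟩ := T.phylo z hzr ⟨u, Classical.not_imp.mp hu⟩
  exact ⟨v, v', ⟨hv, hvz⟩, ⟨hv', hvz'⟩, hne⟩

noncomputable def childAbove (z u : T.V) : T.V :=
  @Classical.epsilon _ ⟨z⟩ fun c => T.IsChild c z ∧ T.le u c

theorem childAbove_spec {z u : T.V} (h : T.le u z) (hne : u ≠ z) :
    T.IsChild (T.childAbove z u) z ∧ T.le u (T.childAbove z u) :=
  Classical.epsilon_spec (T.exists_isChild_le h hne)

theorem childAbove_eq {z u c : T.V} (hc : T.IsChild c z) (huc : T.le u c) :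
    T.childAbove z u = c := by
  have hne : u ≠ z := by
    rintro rfl
    exact hc.2 (T.le_antisymm hc.le huc)
  have h := T.childAbove_spec (T.le_trans huc hc.le) hne
  exact T.eq_of_isChild_of_le h.1 hc h.2 huc

theorem leVE_refl (a : T.VE) : T.leVE a a := by
  rcases a with v | e
  exacts [T.le_refl v, T.le_refl e.1]

theorem leVE_trans {a b c : T.VE} (hab : T.leVE a b) (hbc : T.leVE b c) : T.leVE a c := by
  rcases a with _ | e <;> rcases b with _ | f <;> rcases c with _ | g <;>
    simp only [leVE] at hab hbc ⊢
  · exact T.le_trans hab hbc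
  · exact T.le_trans hab hbc
  · exact T.le_trans hab (T.le_trans (T.le_parent _) hbc)
  · exact T.le_trans hab hbc
  · exact T.le_trans hab hbc
  · exact T.le_trans (T.le_parent _) (T.le_trans hab hbc)
  · rcases eq_or_ne e.1 f.1 with h | h
    · exact h ▸ hbc
    · exact T.le_trans (T.parent_le_of_le_of_ne hab h) (T.le_trans (T.le_parent _) hbc)
  · exact T.le_trans hab hbc

theorem leVE_antisymm {a b : T.VE} (hab : T.leVE a b) (hba : T.leVE b a) : a = b := by
  rcases a with v | e <;> rcases b with w | f <;> simp only [leVE] at hab hba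
  · exact congrArg _ (T.le_antisymm hab hba)
  · exact absurd (T.eq_root_of_parent_le (T.le_trans hba hab)) f.2
  · exact absurd (T.eq_root_of_parent_le (T.le_trans hab hba)) e.2
  · exact congrArg _ (Subtype.ext (T.le_antisymm hab hba))

theorem leVE_root (a : T.VE) : T.leVE a (.inl T.root) := by
  rcases a with v | e
  exacts [T.le_root v, T.le_root _]

theorem le_toVertex_of_leVE {w : T.V} {a : T.VE} (h : T.leVE (.inl w) a) :
    T.le w (T.toVertex a) := by
  rcases a with v | e
  exacts [h, h]

theorem cmpVE_of_leVE_of_leVE {w : T.V} {a b : T.VE}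
    (ha : T.leVE (.inl w) a) (hb : T.leVE (.inl w) b) : T.cmpVE a b := by
  have hab := T.le_total_of_le (T.le_toVertex_of_leVE ha) (T.le_toVertex_of_leVE hb)
  rcases a with v | e <;> rcases b with u | f <;> simp only [cmpVE, leVE, toVertex] at hab ⊢
  · exact hab
  · rcases eq_or_ne f.1 v with h | h
    · exact .inl (h ▸ T.le_refl _)
    · exact hab.imp_right (T.parent_le_of_le_of_ne · h)
  · rcases eq_or_ne e.1 u with h | h
    · exact .inr (h ▸ T.le_refl _)
    · exact hab.imp_left (T.parent_le_of_le_of_ne · h)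
  · exact hab

variable {Y : Type} (σ : T.V → Y)

def speciesSet (v : T.V) : Set Y :=
  {c | ∃ l, T.isLeaf l ∧ T.le l v ∧ σ l = c}

def ChildrenSpeciesDisjoint (z : T.V) : Prop :=
  ∀ v v', T.IsChild v z → T.IsChild v' z → v ≠ v' →
    Disjoint (T.speciesSet σ v) (T.speciesSet σ v')

theorem speciesSet_nonempty (v : T.V) :
    (T.speciesSet σ v).Nonempty :=
  let ⟨l, hl, hlv⟩ := T.exists_isLeaf_le v
  ⟨σ l, l, hl, hlv, rfl⟩

theorem speciesSet_of_isLeaf {v : T.V}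
    (hv : T.isLeaf v) : T.speciesSet σ v = {σ v} := by
  ext c
  constructor
  · rintro ⟨l, -, hl, rfl⟩
    rw [T.eq_of_le_of_isLeaf hv hl]
    rfl
  · rintro rfl
    exact ⟨v, hv, T.le_refl v, rfl⟩

theorem not_childrenSpeciesDisjoint_iff (z : T.V) :
    ¬ T.ChildrenSpeciesDisjoint σ z ↔
      ∃ v' v'' : T.V, v' ≠ v'' ∧ T.parent v' = z ∧ v' ≠ z ∧
        T.parent v'' = z ∧ v'' ≠ z ∧
        ∃ l l' : T.V, T.isLeaf l ∧ T.isLeaf l' ∧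
          T.le l v' ∧ T.le l' v'' ∧ σ l = σ l' := by
  simp only [ChildrenSpeciesDisjoint, IsChild, speciesSet,
    Set.not_disjoint_iff, Set.mem_ofPred_eq, not_forall, exists_prop]
  constructor
  · rintro ⟨v, v', ⟨hv, hvz⟩, ⟨hv', hvz'⟩, hne, _, ⟨l, hl, hlv, rfl⟩,
      ⟨l', hl', hlv', hc⟩⟩
    exact ⟨v, v', hne, hv, hvz, hv', hvz', l, l', hl, hl', hlv, hlv', hc.symm⟩
  · rintro ⟨v, v', hne, hv, hvz, hv', hvz', l, l', hl, hl', hlv, hlv', hc⟩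
    exact ⟨v, v', ⟨hv, hvz⟩, ⟨hv', hvz'⟩, hne, _, ⟨l, hl, hlv, rfl⟩,
      ⟨l', hl', hlv', hc.symm⟩⟩

variable {T σ} in
theorem ChildrenSpeciesDisjoint.eq_of_mem {z : T.V} (hdisj : T.ChildrenSpeciesDisjoint σ z)
    {v v' : T.V} {c : Y} (hv : T.IsChild v z) (hv' : T.IsChild v' z)
    (hc : c ∈ T.speciesSet σ v) (hc' : c ∈ T.speciesSet σ v') : v = v' :=
  by_contra fun hne => Set.disjoint_left.mp (hdisj v v' hv hv' hne) hc hc'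

end PPTree

section Reconciliation

variable {T S : PPTree} {μ : T.V → S.VE}

theorem leVE_of_le_of_leVE_parent (hμ : ∀ v, v ≠ T.root → S.leVE (μ v) (μ (T.parent v)))
    {u w : T.V} (h : T.le u w) : S.leVE (μ u) (μ w) := by
  obtain ⟨n, rfl⟩ := h
  induction n with
  | zero => exact S.leVE_refl _
  | succ n ih =>
    rw [Function.iterate_succ_apply']
    rcases eq_or_ne (T.parent^[n] u) T.root with h | h
    · rwa [h, T.parent_root, ← h]
    · exact S.leVE_trans ih (hμ _ h)

theorem IsRecon.leVE_parent (hR : IsRecon T S μ) (hH : IsHGTFree T S μ) {v : T.V}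
    (hv : v ≠ T.root) : S.leVE (μ v) (μ (T.parent v)) := by
  rcases hH v hv with h | h
  · have hlt : T.lt v (T.parent v) := ⟨T.le_parent v, (T.parent_ne_self hv).symm⟩
    rw [not_not.mp fun hne => hR.R3 _ _ hlt ⟨h, hne⟩]
    exact S.leVE_refl _
  · exact h

theorem IsRecon.leVE_of_le (hR : IsRecon T S μ) (hH : IsHGTFree T S μ) {u w : T.V}
    (h : T.le u w) : S.leVE (μ u) (μ w) :=
  leVE_of_le_of_leVE_parent (μ := μ) (fun _ => hR.leVE_parent hH) h

theorem IsRecon.exists_eq_inr_of_not_childrenSpeciesDisjoint {Y : Type} {σ : T.V → Y}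
    {ι : Y → S.V} (hR : IsRecon T S μ) (hH : IsHGTFree T S μ) (h5 : R5 T S μ)
    (hσ : ∀ l, T.isLeaf l → μ l = .inl (ι (σ l))) {z : T.V} (hzr : z ≠ T.root)
    (hzl : ¬ T.isLeaf z) (hz : ¬ T.ChildrenSpeciesDisjoint σ z) :
    ∃ e, μ z = .inr e := by
  rcases hμz : μ z with u | e
  · refine absurd (fun v v' hv hv' hne => Set.disjoint_left.mpr ?_) hz
    rintro c ⟨l, hl, hlv, rfl⟩ ⟨l', hl', hlv', hc⟩
    have hu : u ≠ S.root := fun h => hzr ((hR.R0 z).mp (by rw [hμz, h]))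
    have hul : ¬ S.isLeaf u := fun h => hzl ((hR.R1 z).mp (by rwa [hμz]))
    refine (h5 z u hμz hu hul).2 v v' hv.1 hv.2 hv'.1 hv'.2 hne
      (S.cmpVE_of_leVE_of_leVE (w := ι (σ l)) ?_ ?_)
    · exact hσ l hl ▸ hR.leVE_of_le hH hlv
    · exact hc ▸ hσ l' hl' ▸ hR.leVE_of_le hH hlv'
  · exact ⟨e, rfl⟩

end Reconciliation

inductive BlockTree.Vertex (B Y : Type) where
  | root
  | rho
  | block (b : B)
  | leaf (c : Y)
  deriving DecidableEq, Fintype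

open BlockTree.Vertex in
def BlockTree.parent {B Y : Type} (f : Y → Option B) :
    BlockTree.Vertex B Y → BlockTree.Vertex B Y
  | root => root
  | rho => root
  | block _ => rho
  | leaf c => (f c).elim rho block

structure BlockTree (B Y : Type) where
  blockOf : Y → Option B
  exists_pair_blockOf_eq (b : B) : ∃ c c', c ≠ c' ∧ blockOf c = some b ∧ blockOf c' = some b
  exists_pair_parent_eq_rho :
    ∃ u v, u ≠ v ∧ BlockTree.parent blockOf u = .rho ∧ BlockTree.parent blockOf v = .rho

namespace BlockTree

open Vertex

variable {B Y : Type}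

theorem parent_ne_leaf (f : Y → Option B) (u : Vertex B Y) (c : Y) : parent f u ≠ leaf c := by
  rcases u with _ | _ | _ | c'
  · simp [parent]
  · simp [parent]
  · simp [parent]
  · cases h : f c' <;> simp [parent, h]

theorem parent_iterate_three (f : Y → Option B) (v : Vertex B Y) : (parent f)^[3] v = root := by
  rcases v with _ | _ | _ | c
  · rfl
  · rfl
  · rfl
  · cases h : f c <;> simp [parent, h]

variable [Fintype B] [DecidableEq B] [Fintype Y] [DecidableEq Y] (D : BlockTree B Y)

def toPPTree : PPTree where
  V := Vertex B Y
  root := root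
  parent := parent D.blockOf
  parent_root := rfl
  reach v := ⟨3, parent_iterate_three D.blockOf v⟩
  planted := by
    refine ⟨rho, ⟨by simp, rfl⟩, fun u ⟨hu, hpu⟩ => ?_⟩
    rcases u with _ | _ | _ | c
    · exact absurd rfl hu
    · rfl
    · simp [parent] at hpu
    · cases h : D.blockOf c <;> simp [parent, h] at hpu
  phylo v hv := by
    rintro ⟨w, hw, -⟩
    rcases v with _ | _ | b | c
    · exact absurd rfl hv
    · obtain ⟨u, u', hne, hu, hu'⟩ := D.exists_pair_parent_eq_rho
      exact ⟨u, u', hu, hu', hne, by rintro rfl; simp [parent] at hu,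
        by rintro rfl; simp [parent] at hu'⟩
    · obtain ⟨c, c', hne, hc, hc'⟩ := D.exists_pair_blockOf_eq b
      exact ⟨leaf c, leaf c', by simp [parent, hc], by simp [parent, hc'], by simpa using hne,
        by simp, by simp⟩
    · exact absurd hw (parent_ne_leaf D.blockOf w c)

@[simp]
theorem toPPTree_parent : D.toPPTree.parent = parent D.blockOf := rfl

theorem isLeaf_leaf (c : Y) : D.toPPTree.isLeaf (leaf c) :=
  fun u hu => absurd hu (parent_ne_leaf D.blockOf u c)

theorem rho_not_isLeaf : ¬ D.toPPTree.isLeaf rho := by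
  obtain ⟨u, -, -, hu, -⟩ := D.exists_pair_parent_eq_rho
  intro h
  obtain rfl := h u hu
  simp [parent] at hu

def toLeafTree : LeafTree Y where
  toPPTree := D.toPPTree
  emb := leaf
  emb_inj _ _ h := leaf.inj h
  emb_leaf := D.isLeaf_leaf
  emb_surj v hv := by
    rcases v with _ | _ | b | c
    · exact absurd (hv rho rfl) (by simp)
    · exact absurd hv D.rho_not_isLeaf
    · obtain ⟨c, -, -, hc, -⟩ := D.exists_pair_blockOf_eq b
      exact absurd (hv (leaf c) (by simp [toPPTree, parent, hc])) (by simp)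
    · exact ⟨c, rfl⟩

theorem le_rho {v : Vertex B Y} (hv : v ≠ root) : D.toPPTree.le v rho := by
  rcases v with _ | _ | _ | c
  · exact absurd rfl hv
  · exact ⟨0, rfl⟩
  · exact ⟨1, rfl⟩
  · cases h : D.blockOf c
    · exact ⟨1, by simp [toPPTree, parent, h]⟩
    · exact ⟨2, by simp [toPPTree, parent, h]⟩

theorem eq_rho_or_eq_root_of_rho_le {w : Vertex B Y} (h : D.toPPTree.le rho w) :
    w = rho ∨ w = root := by
  rcases D.toPPTree.le_iff_eq_or_parent_le.mp h with h | h
  exacts [.inl h, .inr (D.toPPTree.eq_root_of_root_le h)]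

theorem leaf_le_block_iff {c : Y} {b : B} :
    D.toPPTree.le (leaf c) (block b) ↔ D.blockOf c = some b := by
  refine ⟨fun h => ?_, fun h => ⟨1, by simp [toPPTree, parent, h]⟩⟩
  rcases D.toPPTree.le_iff_eq_or_parent_le.mp h with h | h
  · cases h
  cases hc : D.blockOf c with
  | none =>
    simp only [toPPTree_parent, parent, hc, Option.elim] at h
    rcases D.eq_rho_or_eq_root_of_rho_le h with h | h <;> cases h
  | some b' =>
    simp only [toPPTree_parent, parent, hc, Option.elim] at h
    rcases D.toPPTree.le_iff_eq_or_parent_le.mp h with h | h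
    · cases h
      rfl
    · rcases D.eq_rho_or_eq_root_of_rho_le h with h | h <;> cases h

theorem leVE_rhoEdge {a : D.toPPTree.VE} (ha : a ≠ .inl root) :
    D.toPPTree.leVE a (.inr ⟨rho, nofun⟩) := by
  rcases a with v | e
  · exact D.le_rho fun h => ha (congrArg _ h)
  · exact D.le_rho e.2

end BlockTree

section SpeciesTreeConstruction

open BlockTree BlockTree.Vertex

variable {Y : Type} {T : PPTree} {σ : T.V → Y} {z : T.V}

variable (T σ z) in
def MultiSpeciesChild : Type := {v : T.V // T.IsChild v z ∧ (T.speciesSet σ v).Nontrivial}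

noncomputable instance : Fintype (MultiSpeciesChild T σ z) :=
  open Classical in Subtype.fintype _

instance : DecidableEq (MultiSpeciesChild T σ z) := Subtype.instDecidableEq

variable (T σ z) in
noncomputable def blockOfSpecies (c : Y) : Option (MultiSpeciesChild T σ z) :=
  open Classical in
  if h : ∃ b : MultiSpeciesChild T σ z, c ∈ T.speciesSet σ b.1 then some h.choose else none

theorem blockOfSpecies_eq_some_iff (hdisj : T.ChildrenSpeciesDisjoint σ z) {c : Y}
    {b : MultiSpeciesChild T σ z} :
    blockOfSpecies T σ z c = some b ↔ c ∈ T.speciesSet σ b.1 := by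
  unfold blockOfSpecies
  split_ifs with h
  · refine ⟨fun hb => Option.some_injective _ hb ▸ h.choose_spec, fun hc => ?_⟩
    exact congrArg some (Subtype.ext (hdisj.eq_of_mem h.choose.2.1 b.2.1 h.choose_spec hc))
  · exact ⟨nofun, fun hc => absurd ⟨b, hc⟩ h⟩

theorem blockOfSpecies_eq_none (hdisj : T.ChildrenSpeciesDisjoint σ z) {v : T.V} {c : Y}
    (hv : T.IsChild v z) (hsingle : ¬ (T.speciesSet σ v).Nontrivial)
    (hc : c ∈ T.speciesSet σ v) : blockOfSpecies T σ z c = none := by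
  rw [Option.eq_none_iff_forall_ne_some]
  intro b hb
  have hbv := hdisj.eq_of_mem b.2.1 hv ((blockOfSpecies_eq_some_iff hdisj).mp hb) hc
  exact hsingle (hbv ▸ b.2.2)

variable (T σ z) in
noncomputable def childVertex (v : T.V) : Vertex (MultiSpeciesChild T σ z) Y :=
  open Classical in
  if h : T.IsChild v z ∧ (T.speciesSet σ v).Nontrivial then block ⟨v, h⟩
  else leaf (T.speciesSet_nonempty σ v).some

theorem childVertex_of_isLeaf {v : T.V} (hv : T.isLeaf v) : childVertex T σ z v = leaf (σ v) := by
  have hs := T.speciesSet_of_isLeaf σ hv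
  unfold childVertex
  rw [dif_neg fun h => Set.not_nontrivial_singleton (hs ▸ h.2)]
  exact congrArg leaf (Set.mem_singleton_iff.mp (hs ▸ (T.speciesSet_nonempty σ v).some_mem))

theorem childVertex_ne_root (v : T.V) : childVertex T σ z v ≠ root := by
  unfold childVertex
  split_ifs <;> exact nofun

theorem parent_childVertex (hdisj : T.ChildrenSpeciesDisjoint σ z) {v : T.V}
    (hv : T.IsChild v z) : parent (blockOfSpecies T σ z) (childVertex T σ z v) = rho := by
  unfold childVertex
  split_ifs with h
  · rfl
  · have hsingle : ¬ (T.speciesSet σ v).Nontrivial := fun h' => h ⟨hv, h'⟩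
    simp [parent, blockOfSpecies_eq_none hdisj hv hsingle (T.speciesSet_nonempty σ v).some_mem]

theorem childVertex_ne_childVertex (hdisj : T.ChildrenSpeciesDisjoint σ z) {v v' : T.V}
    (hv : T.IsChild v z) (hv' : T.IsChild v' z) (hne : v ≠ v') :
    childVertex T σ z v ≠ childVertex T σ z v' := by
  unfold childVertex
  split_ifs with h h'
  · exact fun heq => hne (congrArg Subtype.val (block.inj heq))
  · exact nofun
  · exact nofun
  · intro heq
    refine hne (hdisj.eq_of_mem hv hv' (T.speciesSet_nonempty σ v).some_mem ?_)
    exact (leaf.inj heq) ▸ (T.speciesSet_nonempty σ v').some_mem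

variable (hdisj : T.ChildrenSpeciesDisjoint σ z) (hzr : z ≠ T.root) (hzl : ¬ T.isLeaf z)

noncomputable def speciesBlockTree : BlockTree (MultiSpeciesChild T σ z) Y where
  blockOf := blockOfSpecies T σ z
  exists_pair_blockOf_eq b := by
    obtain ⟨c, hc, c', hc', hne⟩ := b.2.2
    exact ⟨c, c', hne, (blockOfSpecies_eq_some_iff hdisj).mpr hc,
      (blockOfSpecies_eq_some_iff hdisj).mpr hc'⟩
  exists_pair_parent_eq_rho := by
    obtain ⟨v, v', hv, hv', hne⟩ := T.exists_two_isChild hzr hzl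
    exact ⟨_, _, childVertex_ne_childVertex hdisj hv hv' hne, parent_childVertex hdisj hv,
      parent_childVertex hdisj hv'⟩

variable [Fintype Y] [DecidableEq Y]

local notation "𝒮" => BlockTree.toPPTree (speciesBlockTree hdisj hzr hzl)

noncomputable def recMap (u : T.V) : (𝒮).VE :=
  open Classical in
  if u = T.root then .inl root
  else if T.isLeaf u then .inl (leaf (σ u))
  else if u = z then .inl rho
  else if T.le u z then .inr ⟨childVertex T σ z (T.childAbove z u), childVertex_ne_root _⟩
  else .inr ⟨rho, nofun⟩

theorem recMap_root : recMap hdisj hzr hzl T.root = .inl root := by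
  rw [recMap, if_pos rfl]

theorem recMap_of_isLeaf {u : T.V} (hu : T.isLeaf u) :
    recMap hdisj hzr hzl u = .inl (leaf (σ u)) := by
  rw [recMap, if_neg (T.ne_root_of_isLeaf hu), if_pos hu]

theorem recMap_self : recMap hdisj hzr hzl z = .inl rho := by
  rw [recMap, if_neg hzr, if_neg hzl, if_pos rfl]

theorem recMap_of_le {u : T.V} (hu : ¬ T.isLeaf u) (huz : u ≠ z) (hle : T.le u z) :
    recMap hdisj hzr hzl u =
      .inr ⟨childVertex T σ z (T.childAbove z u), childVertex_ne_root _⟩ := by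
  have hur : u ≠ T.root := by
    rintro rfl
    exact hzr (T.eq_root_of_root_le hle)
  rw [recMap, if_neg hur, if_neg hu, if_neg huz, if_pos hle]

theorem recMap_of_not_le {u : T.V} (hur : u ≠ T.root) (hu : ¬ T.isLeaf u) (hle : ¬ T.le u z) :
    recMap hdisj hzr hzl u = .inr ⟨rho, nofun⟩ := by
  have huz : u ≠ z := by
    rintro rfl
    exact hle (T.le_refl u)
  rw [recMap, if_neg hur, if_neg hu, if_neg huz, if_neg hle]

theorem exists_recMap_eq_inr {u : T.V} (hur : u ≠ T.root) (hu : ¬ T.isLeaf u) (huz : u ≠ z) :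
    ∃ e, recMap hdisj hzr hzl u = .inr e := by
  by_cases hle : T.le u z
  · exact ⟨_, recMap_of_le hdisj hzr hzl hu huz hle⟩
  · exact ⟨_, recMap_of_not_le hdisj hzr hzl hur hu hle⟩

theorem recMap_eq_inl {u : T.V} {w : (𝒮).V} (h : recMap hdisj hzr hzl u = .inl w) :
    (u = T.root ∧ w = root) ∨ (T.isLeaf u ∧ w = leaf (σ u)) ∨ (u = z ∧ w = rho) := by
  by_cases hur : u = T.root
  · subst hur
    rw [recMap_root] at h
    exact .inl ⟨rfl, (Sum.inl.inj h).symm⟩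
  by_cases hu : T.isLeaf u
  · rw [recMap_of_isLeaf hdisj hzr hzl hu] at h
    exact .inr (.inl ⟨hu, (Sum.inl.inj h).symm⟩)
  by_cases huz : u = z
  · subst huz
    rw [recMap_self] at h
    exact .inr (.inr ⟨rfl, (Sum.inl.inj h).symm⟩)
  obtain ⟨e, he⟩ := exists_recMap_eq_inr hdisj hzr hzl hur hu huz
  exact absurd (he.symm.trans h) nofun

theorem recMap_eq_inl_root_iff {u : T.V} : recMap hdisj hzr hzl u = .inl root ↔ u = T.root := by
  refine ⟨fun h => ?_, fun h => h ▸ recMap_root hdisj hzr hzl⟩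
  rcases recMap_eq_inl hdisj hzr hzl h with ⟨hu, -⟩ | ⟨-, h⟩ | ⟨-, h⟩
  exacts [hu, (by cases h), (by cases h)]

theorem isLeafVE_recMap_iff (u : T.V) :
    (𝒮).isLeafVE (recMap hdisj hzr hzl u) ↔ T.isLeaf u := by
  by_cases hur : u = T.root
  · subst hur
    rw [recMap_root]
    exact iff_of_false ((𝒮).root_not_isLeaf) T.root_not_isLeaf
  by_cases hu : T.isLeaf u
  · rw [recMap_of_isLeaf hdisj hzr hzl hu]
    exact iff_of_true (isLeaf_leaf _ _) hu
  by_cases huz : u = z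
  · subst huz
    rw [recMap_self]
    exact iff_of_false (rho_not_isLeaf _) hzl
  obtain ⟨e, he⟩ := exists_recMap_eq_inr hdisj hzr hzl hur hu huz
  rw [he]
  exact iff_of_false id hu

include hdisj in
theorem leaf_le_childVertex_iff {v : T.V} {c : Y} (hv : T.IsChild v z) :
    (𝒮).le (leaf c) (childVertex T σ z v) ↔ c ∈ T.speciesSet σ v := by
  unfold childVertex
  split_ifs with h
  · exact (leaf_le_block_iff _).trans (blockOfSpecies_eq_some_iff hdisj)
  · have hsub : (T.speciesSet σ v).Subsingleton :=
      Set.not_nontrivial_iff.mp fun h' => h ⟨hv, h'⟩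
    have hsome := (T.speciesSet_nonempty σ v).some_mem
    constructor
    · intro hle
      obtain rfl := leaf.inj ((𝒮).eq_of_le_of_isLeaf (isLeaf_leaf _ _) hle)
      exact hsome
    · intro hc
      rw [hsub hc hsome]
      exact (𝒮).le_refl _

theorem toVertex_recMap_of_isChild {v : T.V} (hv : T.IsChild v z) :
    (𝒮).toVertex (recMap hdisj hzr hzl v) = childVertex T σ z v := by
  by_cases hvl : T.isLeaf v
  · rw [recMap_of_isLeaf hdisj hzr hzl hvl, childVertex_of_isLeaf hvl]
    rfl
  · rw [recMap_of_le hdisj hzr hzl hvl hv.2 hv.le, T.childAbove_eq hv (T.le_refl v)]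
    rfl

theorem recMap_eq_inl_rho_iff {u : T.V} : recMap hdisj hzr hzl u = .inl rho ↔ u = z := by
  refine ⟨fun h => ?_, fun h => h ▸ recMap_self hdisj hzr hzl⟩
  rcases recMap_eq_inl hdisj hzr hzl h with ⟨-, h⟩ | ⟨-, h⟩ | ⟨hu, -⟩
  exacts [(by cases h), (by cases h), hu]

theorem isChild_childVertex {v : T.V} (hv : T.IsChild v z) :
    (𝒮).IsChild (childVertex T σ z v) rho :=
  ⟨parent_childVertex hdisj hv, fun h => by
    have := parent_childVertex hdisj hv
    rw [h] at this
    cases this⟩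

theorem recMap_leVE_parent {v : T.V} (hv : v ≠ T.root) :
    (𝒮).leVE (recMap hdisj hzr hzl v) (recMap hdisj hzr hzl (T.parent v)) := by
  have hpl := T.not_isLeaf_parent hv
  by_cases hpz : T.le (T.parent v) z
  swap
  · rcases eq_or_ne (T.parent v) T.root with hpr | hpr
    · rw [hpr, recMap_root]
      exact (𝒮).leVE_root _
    · rw [recMap_of_not_le hdisj hzr hzl hpr hpl hpz]
      exact leVE_rhoEdge _ fun h => hv ((recMap_eq_inl_root_iff hdisj hzr hzl).mp h)
  have hvz : v ≠ z := fun h => hzr (T.eq_root_of_parent_le (h ▸ hpz))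
  have hvle : T.le v z := T.le_trans (T.le_parent v) hpz
  obtain ⟨hw, hvw⟩ := T.childAbove_spec hvle hvz
  rcases eq_or_ne (T.parent v) z with hp | hp
  · rw [hp, recMap_self]
    by_cases hvl : T.isLeaf v
    · rw [recMap_of_isLeaf hdisj hzr hzl hvl]
      exact le_rho _ nofun
    · rw [recMap_of_le hdisj hzr hzl hvl hvz hvle]
      exact (isChild_childVertex hdisj hzr hzl hw).1 ▸ (𝒮).le_refl _
  · have hvw' : v ≠ T.childAbove z v := fun h => hp (h ▸ hw.1)
    rw [recMap_of_le hdisj hzr hzl hpl hp hpz,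
      T.childAbove_eq hw (T.parent_le_of_le_of_ne hvw hvw')]
    by_cases hvl : T.isLeaf v
    · rw [recMap_of_isLeaf hdisj hzr hzl hvl]
      exact (leaf_le_childVertex_iff hdisj hzr hzl hw).mpr ⟨v, hvl, hvw, rfl⟩
    · rw [recMap_of_le hdisj hzr hzl hvl hvz hvle]
      exact (𝒮).leVE_refl _

theorem recMap_leVE_of_le {u w : T.V} (h : T.le u w) :
    (𝒮).leVE (recMap hdisj hzr hzl u) (recMap hdisj hzr hzl w) :=
  leVE_of_le_of_leVE_parent (μ := recMap hdisj hzr hzl)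
    (fun _ => recMap_leVE_parent hdisj hzr hzl) h

theorem isHGTFree_recMap : IsHGTFree T (𝒮) (recMap hdisj hzr hzl) :=
  fun _ hv => .inr (recMap_leVE_parent hdisj hzr hzl hv)

theorem isRecon_recMap : IsRecon T (𝒮) (recMap hdisj hzr hzl) where
  R0 _ := recMap_eq_inl_root_iff hdisj hzr hzl
  R1 := isLeafVE_recMap_iff hdisj hzr hzl
  R2 a b hba := by
    rintro ⟨w, hw⟩ - heq
    -- `a` has a proper descendant, so it is the root or `z`, the only inner vertices sent to
    -- vertices of `S`
    rcases recMap_eq_inl hdisj hzr hzl hw with ⟨rfl, rfl⟩ | ⟨ha, -⟩ | ⟨rfl, rfl⟩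
    · exact hba.2 ((recMap_eq_inl_root_iff hdisj hzr hzl).mp (heq.symm.trans hw))
    · exact hba.2 (T.eq_of_le_of_isLeaf ha hba.1)
    · exact hba.2 ((recMap_eq_inl_rho_iff hdisj hzr hzl).mp (heq.symm.trans hw))
  R3 _ _ hba hlt :=
    hlt.2 ((𝒮).leVE_antisymm hlt.1 (recMap_leVE_of_le hdisj hzr hzl hba.1))

theorem not_leVE_recMap_of_isChild {a b : T.V} (ha : T.IsChild a z) (hb : T.IsChild b z)
    (hab : a ≠ b) : ¬ (𝒮).leVE (recMap hdisj hzr hzl a) (recMap hdisj hzr hzl b) := by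
  intro h
  obtain ⟨c, l, hl, hla, rfl⟩ := T.speciesSet_nonempty σ a
  have hlb : (𝒮).leVE (.inl (leaf (σ l))) (recMap hdisj hzr hzl b) :=
    (𝒮).leVE_trans (recMap_of_isLeaf hdisj hzr hzl hl ▸ recMap_leVE_of_le hdisj hzr hzl hla) h
  have hlb' := (𝒮).le_toVertex_of_leVE hlb
  rw [toVertex_recMap_of_isChild hdisj hzr hzl hb] at hlb'
  exact Set.disjoint_left.mp (hdisj a b ha hb hab) ⟨l, hl, hla, rfl⟩
    ((leaf_le_childVertex_iff hdisj hzr hzl hb).mp hlb')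

theorem r5_recMap : R5 T (𝒮) (recMap hdisj hzr hzl) := by
  intro x u hx hur hul
  obtain ⟨rfl, rfl⟩ : z = x ∧ rho = u := by
    rcases recMap_eq_inl hdisj hzr hzl hx with ⟨-, rfl⟩ | ⟨-, rfl⟩ | ⟨hx, hu⟩
    exacts [absurd rfl hur, absurd (isLeaf_leaf _ _) hul, ⟨hx.symm, hu.symm⟩]
  refine ⟨?_, fun a b ha haz hb hbz hab hcmp => ?_⟩
  · obtain ⟨v, v', hv, hv', hne⟩ := T.exists_two_isChild hzr hzl
    refine ⟨v, v', hne, hv.1, hv.2, hv'.1, hv'.2, ?_⟩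
    rw [toVertex_recMap_of_isChild hdisj hzr hzl hv, toVertex_recMap_of_isChild hdisj hzr hzl hv']
    exact ((𝒮).lca_eq_of_isChild (isChild_childVertex hdisj hzr hzl hv)
      (isChild_childVertex hdisj hzr hzl hv') (childVertex_ne_childVertex hdisj hv hv' hne)).symm
  · rcases hcmp with h | h
    · exact not_leVE_recMap_of_isChild hdisj hzr hzl ⟨ha, haz⟩ ⟨hb, hbz⟩ hab h
    · exact not_leVE_recMap_of_isChild hdisj hzr hzl ⟨hb, hbz⟩ ⟨ha, haz⟩ hab.symm h

end SpeciesTreeConstruction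

/-- For a leaf-colored planted phylogenetic tree `(T,σ)`
(with species set `Y`) and distinct leaves `x ≠ y`, the following are
equivalent: (i) `ℓ_μ(lca_T(x,y)) = □` (i.e. `μ(lca_T(x,y)) ∈ E(S)`) for every
species tree `S` on `Y` and every HGT-free σ-reconciliation `(T,S,μ,σ)`
satisfying (R5); (ii) there are two distinct children `v',v''` of
`lca_T(x,y)` with `σ(L(T(v'))) ∩ σ(L(T(v''))) ≠ ∅`. -/
theorem always_duplication_iff_children_species_overlap
    {Y : Type} [Fintype Y] [DecidableEq Y]
    (T : PPTree) (σ : T.V → Y)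
    (x y : T.V) (hx : T.isLeaf x) (hy : T.isLeaf y) (hxy : x ≠ y) :
    (∀ (S : LeafTree Y) (μ : T.V → S.toPPTree.VE),
        IsRecon T S.toPPTree μ → IsHGTFree T S.toPPTree μ →
        R5 T S.toPPTree μ →
        (∀ l : T.V, T.isLeaf l → μ l = Sum.inl (S.emb (σ l))) →
        ∃ e : S.toPPTree.Edge, μ (T.lca x y) = Sum.inr e) ↔
    (∃ v' v'' : T.V, v' ≠ v'' ∧
        T.parent v' = T.lca x y ∧ v' ≠ T.lca x y ∧
        T.parent v'' = T.lca x y ∧ v'' ≠ T.lca x y ∧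
        ∃ l l' : T.V, T.isLeaf l ∧ T.isLeaf l' ∧
          T.le l v' ∧ T.le l' v'' ∧ σ l = σ l') := by
  have hzr : T.lca x y ≠ T.root := T.lca_ne_root (T.ne_root_of_isLeaf hx) (T.ne_root_of_isLeaf hy)
  have hzl : ¬ T.isLeaf (T.lca x y) := T.lca_not_isLeaf hxy
  rw [← T.not_childrenSpeciesDisjoint_iff]
  refine ⟨fun hdup hdisj => ?_, fun hov S μ hR hH h5 hσ =>
    hR.exists_eq_inr_of_not_childrenSpeciesDisjoint hH h5 hσ hzr hzl hov⟩
  obtain ⟨e, he⟩ := hdup (speciesBlockTree hdisj hzr hzl).toLeafTree (recMap hdisj hzr hzl)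
    (isRecon_recMap hdisj hzr hzl) (isHGTFree_recMap hdisj hzr hzl) (r5_recMap hdisj hzr hzl)
    fun l hl => recMap_of_isLeaf hdisj hzr hzl hl
  rw [recMap_self] at he
  cases he
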